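/- Let Q ∈ ℂ^{n×n} be Hermitian positive semidefinite and q ∈ ℂⁿ. Consider f(μ) = ‖(Q + μI_n)⁻¹q‖₂² for μ > 0. (a) If q is orthogonal to the null space of Q (equivalently, q lies in the range of Q), then f(μ) → ‖Q†q‖₂² as μ → 0⁺. (b) If q is not orthogonal to the null space of Q, then f(μ) → +∞ as μ → 0⁺. -/

import Mathlib

/-!
Write `A = Q + μ I`. Since `Q ⪰ 0`, `re ⟨w, A w⟩ ≥ μ ‖w‖²`, so `‖A⁻¹ z‖ ≤ ‖z‖ / μ`.

(a) If `Q x = q` and `Q y = x`, then `A⁻¹ Q = I - μ A⁻¹` gives `A⁻¹ q - x = -μ A⁻¹ x` and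
`A⁻¹ x = y - μ A⁻¹ y`, whence `‖A⁻¹ q - x‖ ≤ 2 μ ‖y‖ → 0`.

(b) If `Q v = 0`, then `vᴴ A = μ vᴴ`, so `vᴴ q = μ vᴴ A⁻¹ q` and by Cauchy–Schwarz
`‖A⁻¹ q‖ ≥ |vᴴ q| / (μ ‖v‖) → ∞`.
-/

open Matrix ComplexOrder Filter Topology

/-- The Euclidean norm ‖x‖₂ = √(xᴴx) of a complex vector. -/
noncomputable def eucNorm {n : ℕ} (x : Fin n → ℂ) : ℝ :=
  Real.sqrt ((star x ⬝ᵥ x).re)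

open WithLp

lemma star_dotProduct_eq_inner {ι : Type*} [Fintype ι] {𝕜 : Type*} [RCLike 𝕜] (v w : ι → 𝕜) :
    star v ⬝ᵥ w = inner 𝕜 (toLp 2 v) (toLp 2 w) := by
  rw [EuclideanSpace.inner_toLp_toLp, dotProduct_comm]

namespace Matrix

variable {ι 𝕜 : Type*} [Fintype ι] [DecidableEq ι] [RCLike 𝕜] {Q : Matrix ι ι 𝕜}

lemma star_dotProduct_add_smul_one_mulVec (v w : ι → 𝕜) (μ : 𝕜) :
    star v ⬝ᵥ ((Q + μ • 1) *ᵥ w) = star v ⬝ᵥ (Q *ᵥ w) + μ * (star v ⬝ᵥ w) := by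
  rw [add_mulVec, dotProduct_add, smul_mulVec, one_mulVec, dotProduct_smul, smul_eq_mul]

namespace PosSemidef

variable (hQ : Q.PosSemidef) {μ : ℝ}
include hQ

lemma isUnit_det_add_smul_one (hμ : 0 < μ) : IsUnit (Q + (μ : 𝕜) • 1).det :=
  (isUnit_iff_isUnit_det _).mp <|
    (PosDef.posSemidef_add hQ (PosDef.one.smul (RCLike.ofReal_pos.mpr hμ))).isUnit

lemma add_smul_one_mulVec_inv_mulVec (hμ : 0 < μ) (z : ι → 𝕜) :
    (Q + (μ : 𝕜) • 1) *ᵥ ((Q + (μ : 𝕜) • 1)⁻¹ *ᵥ z) = z := by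
  rw [mulVec_mulVec, mul_nonsing_inv _ (hQ.isUnit_det_add_smul_one hμ), one_mulVec]

lemma inv_add_smul_one_mulVec_mulVec (hμ : 0 < μ) (w : ι → 𝕜) :
    (Q + (μ : 𝕜) • 1)⁻¹ *ᵥ (Q *ᵥ w) = w - (μ : 𝕜) • ((Q + (μ : 𝕜) • 1)⁻¹ *ᵥ w) := by
  have hQw : Q *ᵥ w = (Q + (μ : 𝕜) • 1) *ᵥ w - (μ : 𝕜) • w := by
    rw [add_mulVec, smul_mulVec, one_mulVec, add_sub_cancel_right]
  rw [hQw, mulVec_sub, mulVec_mulVec, nonsing_inv_mul _ (hQ.isUnit_det_add_smul_one hμ),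
    one_mulVec, mulVec_smul]

lemma mul_norm_le_norm_add_smul_one_mulVec (w : ι → 𝕜) :
    μ * ‖toLp 2 w‖ ≤ ‖toLp 2 ((Q + (μ : 𝕜) • 1) *ᵥ w)‖ := by
  have hre : μ * ‖toLp 2 w‖ ^ 2 ≤ RCLike.re (star w ⬝ᵥ ((Q + (μ : 𝕜) • 1) *ᵥ w)) := by
    rw [star_dotProduct_add_smul_one_mulVec, map_add, RCLike.re_ofReal_mul,
      star_dotProduct_eq_inner w w, inner_self_eq_norm_sq]
    linarith [hQ.re_dotProduct_nonneg w]
  have hcs : RCLike.re (star w ⬝ᵥ ((Q + (μ : 𝕜) • 1) *ᵥ w)) ≤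
      ‖toLp 2 w‖ * ‖toLp 2 ((Q + (μ : 𝕜) • 1) *ᵥ w)‖ := by
    rw [star_dotProduct_eq_inner]
    exact re_inner_le_norm _ _
  rcases (norm_nonneg (toLp 2 w)).eq_or_lt with hw | hw
  · rw [← hw, mul_zero]
    exact norm_nonneg _
  · nlinarith

lemma mul_norm_inv_add_smul_one_mulVec_le (hμ : 0 < μ) (z : ι → 𝕜) :
    μ * ‖toLp 2 ((Q + (μ : 𝕜) • 1)⁻¹ *ᵥ z)‖ ≤ ‖toLp 2 z‖ := by
  have h := hQ.mul_norm_le_norm_add_smul_one_mulVec (μ := μ) ((Q + (μ : 𝕜) • 1)⁻¹ *ᵥ z)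
  rwa [hQ.add_smul_one_mulVec_inv_mulVec hμ] at h

lemma norm_inv_add_smul_one_mulVec_sub_le (hμ : 0 < μ) {q x y : ι → 𝕜}
    (hx : Q *ᵥ x = q) (hy : Q *ᵥ y = x) :
    ‖toLp 2 ((Q + (μ : 𝕜) • 1)⁻¹ *ᵥ q) - toLp 2 x‖ ≤ 2 * μ * ‖toLp 2 y‖ := by
  have hAy := hQ.mul_norm_inv_add_smul_one_mulVec_le hμ y
  calc ‖toLp 2 ((Q + (μ : 𝕜) • 1)⁻¹ *ᵥ q) - toLp 2 x‖
      = μ * ‖toLp 2 y - (μ : 𝕜) • toLp 2 ((Q + (μ : 𝕜) • 1)⁻¹ *ᵥ y)‖ := by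
        rw [← hx, hQ.inv_add_smul_one_mulVec_mulVec hμ, ← hy,
          hQ.inv_add_smul_one_mulVec_mulVec hμ y, hy]
        simp [norm_smul, abs_of_pos hμ]
    _ ≤ μ * (‖toLp 2 y‖ + μ * ‖toLp 2 ((Q + (μ : 𝕜) • 1)⁻¹ *ᵥ y)‖) := by
        gcongr
        refine (norm_sub_le _ _).trans_eq ?_
        simp [norm_smul, abs_of_pos hμ]
    _ ≤ 2 * μ * ‖toLp 2 y‖ := by nlinarith

lemma tendsto_inv_add_smul_one_mulVec {q x y : ι → 𝕜} (hx : Q *ᵥ x = q) (hy : Q *ᵥ y = x) :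
    Tendsto (fun μ : ℝ => toLp 2 ((Q + (μ : 𝕜) • 1)⁻¹ *ᵥ q)) (𝓝[>] 0) (𝓝 (toLp 2 x)) := by
  rw [tendsto_iff_norm_sub_tendsto_zero]
  refine squeeze_zero' (.of_forall fun _ => norm_nonneg _)
    (eventually_mem_nhdsWithin.mono fun μ hμ => hQ.norm_inv_add_smul_one_mulVec_sub_le hμ hx hy) ?_
  have h : Tendsto (fun μ : ℝ => 2 * μ * ‖toLp 2 y‖) (𝓝 0) (𝓝 (2 * 0 * ‖toLp 2 y‖)) :=
    (tendsto_id.const_mul 2).mul_const _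
  simpa using h.mono_left nhdsWithin_le_nhds

lemma mul_star_dotProduct_inv_add_smul_one_mulVec (hμ : 0 < μ) {v : ι → 𝕜} (hv : Q *ᵥ v = 0)
    (q : ι → 𝕜) : (μ : 𝕜) * (star v ⬝ᵥ ((Q + (μ : 𝕜) • 1)⁻¹ *ᵥ q)) = star v ⬝ᵥ q := by
  have hvQ : star v ᵥ* Q = 0 := by
    rw [← hQ.isHermitian.eq, ← star_mulVec, hv, star_zero]
  conv_rhs => rw [← hQ.add_smul_one_mulVec_inv_mulVec hμ q]
  rw [star_dotProduct_add_smul_one_mulVec, dotProduct_mulVec (star v) Q, hvQ, zero_dotProduct,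
    zero_add]

lemma tendsto_norm_inv_add_smul_one_mulVec_atTop {v q : ι → 𝕜} (hv : Q *ᵥ v = 0)
    (hvq : star v ⬝ᵥ q ≠ 0) :
    Tendsto (fun μ : ℝ => ‖toLp 2 ((Q + (μ : 𝕜) • 1)⁻¹ *ᵥ q)‖) (𝓝[>] 0) atTop := by
  have hv0 : 0 < ‖toLp 2 v‖ := by
    refine norm_pos_iff.mpr fun h => hvq ?_
    rw [show v = 0 from congrArg ofLp h, star_zero, zero_dotProduct]
  have hlow : ∀ μ : ℝ, 0 < μ →
      ‖star v ⬝ᵥ q‖ / ‖toLp 2 v‖ * μ⁻¹ ≤ ‖toLp 2 ((Q + (μ : 𝕜) • 1)⁻¹ *ᵥ q)‖ := by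
    intro μ hμ
    rw [div_mul_eq_mul_div, div_le_iff₀ hv0, ← div_eq_mul_inv, div_le_iff₀ hμ,
      ← hQ.mul_star_dotProduct_inv_add_smul_one_mulVec hμ hv, norm_mul, RCLike.norm_ofReal,
      abs_of_pos hμ, star_dotProduct_eq_inner]
    nlinarith [norm_inner_le_norm (𝕜 := 𝕜) (toLp 2 v) (toLp 2 ((Q + (μ : 𝕜) • 1)⁻¹ *ᵥ q))]
  exact tendsto_atTop_mono' _ (eventually_mem_nhdsWithin.mono hlow)
    (tendsto_inv_nhdsGT_zero.const_mul_atTop (by positivity))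

end PosSemidef
end Matrix

lemma eucNorm_eq_norm_toLp {n : ℕ} (x : Fin n → ℂ) : eucNorm x = ‖toLp 2 x‖ := by
  rw [eucNorm, norm_eq_sqrt_re_inner (𝕜 := ℂ), EuclideanSpace.inner_toLp_toLp, dotProduct_comm]
  rfl

/-- for Q Hermitian positive semidefinite, consider
f(μ) = ‖(Q + μI)⁻¹q‖₂² for μ > 0.
(a) If q is orthogonal to the null space of Q, i.e. q lies in the range of Q, then
f(μ) → ‖Q†q‖₂² as μ → 0⁺, where Q†q is characterized as the vector x with
Q x = q and x ∈ range Q.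
(b) If q is not orthogonal to the null space of Q, then f(μ) → +∞ as μ → 0⁺. -/
theorem trust_region_secular_limit {n : ℕ}
    (Q : Matrix (Fin n) (Fin n) ℂ) (hQ : Q.PosSemidef) (q : Fin n → ℂ) :
    (∀ x : Fin n → ℂ, Q *ᵥ x = q → (∃ y, Q *ᵥ y = x) →
      Tendsto (fun μ : ℝ => (eucNorm ((Q + (μ : ℂ) • 1)⁻¹ *ᵥ q)) ^ 2)
        (𝓝[>] (0 : ℝ)) (𝓝 ((eucNorm x) ^ 2))) ∧
    ((∃ v : Fin n → ℂ, Q *ᵥ v = 0 ∧ star v ⬝ᵥ q ≠ 0) →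
      Tendsto (fun μ : ℝ => (eucNorm ((Q + (μ : ℂ) • 1)⁻¹ *ᵥ q)) ^ 2)
        (𝓝[>] (0 : ℝ)) atTop) := by
  simp_rw [eucNorm_eq_norm_toLp]
  refine ⟨fun x hx ⟨y, hy⟩ => (hQ.tendsto_inv_add_smul_one_mulVec hx hy).norm.pow 2, ?_⟩
  rintro ⟨v, hv, hvq⟩
  exact (tendsto_pow_atTop two_ne_zero).comp (hQ.tendsto_norm_inv_add_smul_one_mulVec_atTop hv hvq)
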